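/- Let d ≥ 1 and let b : [0,∞)^d → ℝ satisfy Assumption (A). For τ > 0 set P_τ = {ν ∈ [0,∞)^d : b(ν) ≤ τ}, and let P = ⋂_{τ>0} (1/τ)P_τ in the increasing case (respectively P = ⋃_{τ>0} (1/τ)P_τ in the decreasing case). Assume P is Jordan measurable with Lebesgue measure |P|. For each M ∈ ℕ let Λ_M ⊂ ℕ^d be a quasi-optimal index set of cardinality M. Then for every ε > 0 there exists M_ε ∈ ℕ such that for all M ≥ M_ε, the tail sum satisfies ∑_{ν ∈ ℕ^d \ Λ_M} e^{−b(ν)} ≤ C_u(ε) · M · exp( − ( M / (|P|(1+ε)) )^{1/d} ), where C_u(ε) = (4e + 4εe − 2)·e/(e−1). -/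

import Mathlib

/-!
Write `A t = t⁻¹ • Pset b t`. A lattice point `ν` with `b ν ≤ t` carries the unit cube `[ν, ν + 1)`,
and the rescaled cubes are disjoint and lie in the `t⁻¹`-thickening of `A t`; hence
`#{ν : b ν ≤ t} ≤ t ^ d · |cthickening t⁻¹ (A t)|`. As `t → ∞` this volume drops below any
`a > |P|`: in the increasing case the thickenings decrease to a subset of `⋂ A t = P`, in the
decreasing case they lie in `cthickening t⁻¹ P`, whose volume tends to `|closure P| = |P|` by
Jordan measurability. So `#{b ≤ t} ≤ |P| (1 + ε/2) t ^ d` for large `t`. With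
`t ^ d = M / (|P| (1 + ε))` this count is at most `M`, so every index outside the quasi-optimal
`Λ_M` has `b ν > t`. Grouping those indices into layers `t + k ≤ b ν < t + k + 1` and using
`(t + k + 1) ^ d ≤ t ^ d e^{(k+1)/2}` for `t ≥ 2d` bounds the tail by a geometric series,
`≤ 2e · M e^{-t}`.
-/

open MeasureTheory Real Filter Pointwise

noncomputable section

/-- Embedding of a multi-index `ν ∈ ℕ^d` into `ℝ^d`. -/
def nuR {d : ℕ} (ν : Fin d → ℕ) : Fin d → ℝ := fun i => (ν i : ℝ)

/-- Euclidean norm on `ℝ^d` (viewed as `Fin d → ℝ`). -/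
def eNorm {d : ℕ} (x : Fin d → ℝ) : ℝ := Real.sqrt (∑ i, x i ^ 2)

/-- `τ ↦ b(τν)/τ` is increasing on `(0,∞)` for every nonnegative `ν`. -/
def IsIncreasingCase {d : ℕ} (b : (Fin d → ℝ) → ℝ) : Prop :=
  ∀ ν : Fin d → ℝ, (∀ i, 0 ≤ ν i) → MonotoneOn (fun τ : ℝ => b (τ • ν) / τ) (Set.Ioi 0)

/-- `τ ↦ b(τν)/τ` is decreasing on `(0,∞)` for every nonnegative `ν`. -/
def IsDecreasingCase {d : ℕ} (b : (Fin d → ℝ) → ℝ) : Prop :=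
  ∀ ν : Fin d → ℝ, (∀ i, 0 ≤ ν i) → AntitoneOn (fun τ : ℝ => b (τ • ν) / τ) (Set.Ioi 0)

/-- Assumption (A) on the exponent map `b : [0,∞)^d → ℝ`:
(i) `b 0 = 0` and `b` continuous on the nonnegative orthant;
(ii) `τ ↦ b(τν)/τ` monotone increasing for all nonnegative `ν`, or decreasing for all such `ν`;
(iii) there are `0 < c < C` with `c‖ν‖ ≤ b ν ≤ C‖ν‖` for all nonnegative `ν` with
`‖ν‖` (Euclidean norm) sufficiently large. -/
def AssumptionA {d : ℕ} (b : (Fin d → ℝ) → ℝ) : Prop :=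
  b 0 = 0 ∧ ContinuousOn b {x | ∀ i, 0 ≤ x i} ∧
  (IsIncreasingCase b ∨ IsDecreasingCase b) ∧
  ∃ c C : ℝ, 0 < c ∧ c < C ∧ ∃ R : ℝ, ∀ x : Fin d → ℝ, (∀ i, 0 ≤ x i) → R ≤ eNorm x →
    c * eNorm x ≤ b x ∧ b x ≤ C * eNorm x

/-- `P_τ = {ν ∈ [0,∞)^d : b(ν) ≤ τ}`. -/
def Pset {d : ℕ} (b : (Fin d → ℝ) → ℝ) (τ : ℝ) : Set (Fin d → ℝ) :=
  {x | (∀ i, 0 ≤ x i) ∧ b x ≤ τ}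

/-- Constant `C_u(ε) = (4e + 4εe − 2)·e/(e−1)`. -/
def Cu (ε : ℝ) : ℝ :=
  (4 * Real.exp 1 + 4 * ε * Real.exp 1 - 2) * Real.exp 1 / (Real.exp 1 - 1)

open scoped ENNReal Topology
open Metric Bornology

lemma norm_le_eNorm {d : ℕ} (x : Fin d → ℝ) : ‖x‖ ≤ eNorm x := by
  have h : eNorm x = ‖(WithLp.toLp 2 x : EuclideanSpace ℝ (Fin d))‖ := by
    simp [eNorm, EuclideanSpace.norm_eq]
  rw [h, pi_norm_le_iff_of_nonneg (norm_nonneg _)]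
  exact fun i => PiLp.norm_apply_le (WithLp.toLp 2 x : EuclideanSpace ℝ (Fin d)) i

lemma AssumptionA.exists_mul_norm_le {d : ℕ} {b : (Fin d → ℝ) → ℝ} (hb : AssumptionA b) :
    ∃ c R : ℝ, 0 < c ∧ ∀ x : Fin d → ℝ, (∀ i, 0 ≤ x i) → R ≤ ‖x‖ → c * ‖x‖ ≤ b x := by
  obtain ⟨-, -, -, c, _, hc, -, R, hbound⟩ := hb
  exact ⟨c, R, hc, fun x hx hR => (mul_le_mul_of_nonneg_left (norm_le_eNorm x) hc.le).trans
    (hbound x hx (hR.trans (norm_le_eNorm x))).1⟩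

lemma two_mul_exp_one_le_Cu {ε : ℝ} (hε : 0 ≤ ε) : 2 * exp 1 ≤ Cu ε := by
  have he : 1 < exp 1 := one_lt_exp_iff.2 one_pos
  rw [Cu, le_div_iff₀ (by linarith)]
  nlinarith [exp_pos 1, mul_nonneg hε (exp_pos 1).le]

section ScaledSublevelSets

variable {d : ℕ} {b : (Fin d → ℝ) → ℝ}

lemma mem_inv_smul_Pset_iff {t : ℝ} (ht : 0 < t) {x : Fin d → ℝ} :
    x ∈ t⁻¹ • Pset b t ↔ (∀ i, 0 ≤ x i) ∧ b (t • x) / t ≤ 1 := by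
  rw [Set.mem_inv_smul_set_iff₀ ht.ne', div_le_one ht]
  simp only [Pset, Set.mem_ofPred_eq, Pi.smul_apply, smul_eq_mul, mul_nonneg_iff_of_pos_left ht]

lemma IsIncreasingCase.antitoneOn_inv_smul_Pset (hb : IsIncreasingCase b) :
    AntitoneOn (fun t => t⁻¹ • Pset b t) (Set.Ioi 0) := by
  intro s hs t ht hst x hx
  rw [mem_inv_smul_Pset_iff ht] at hx
  rw [mem_inv_smul_Pset_iff hs]
  exact ⟨hx.1, (hb x hx.1 hs ht hst).trans hx.2⟩

lemma IsDecreasingCase.monotoneOn_inv_smul_Pset (hb : IsDecreasingCase b) :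
    MonotoneOn (fun t => t⁻¹ • Pset b t) (Set.Ioi 0) := by
  intro s hs t ht hst x hx
  rw [mem_inv_smul_Pset_iff hs] at hx
  rw [mem_inv_smul_Pset_iff ht]
  exact ⟨hx.1, (hb x hx.1 hs ht hst).trans hx.2⟩

lemma isClosed_inv_smul_Pset (hcont : ContinuousOn b {x | ∀ i, 0 ≤ x i}) {t : ℝ} (ht : 0 < t) :
    IsClosed (t⁻¹ • Pset b t) := by
  have horthant : IsClosed {x : Fin d → ℝ | ∀ i, 0 ≤ x i} := by
    simp only [Set.ofPred_forall]
    exact isClosed_iInter fun i => isClosed_le continuous_const (continuous_apply i)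
  exact (hcont.preimage_isClosed_of_isClosed horthant isClosed_Iic).smul_of_ne_zero
    (inv_ne_zero ht.ne')

lemma inv_smul_Pset_subset_closedBall {c R : ℝ} (hc : 0 < c)
    (hlow : ∀ x : Fin d → ℝ, (∀ i, 0 ≤ x i) → R ≤ ‖x‖ → c * ‖x‖ ≤ b x) {t : ℝ} (ht : 1 ≤ t) :
    t⁻¹ • Pset b t ⊆ closedBall 0 (max R c⁻¹) := by
  have ht0 : 0 < t := one_pos.trans_le ht
  intro x hx
  rw [Set.mem_inv_smul_set_iff₀ ht0.ne'] at hx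
  have hnorm : ‖t • x‖ = t * ‖x‖ := by rw [norm_smul, Real.norm_of_nonneg ht0.le]
  rw [mem_closedBall_zero_iff]
  by_cases hR : R ≤ ‖t • x‖
  · have h := (hlow _ hx.1 hR).trans hx.2
    rw [hnorm, mul_left_comm] at h
    refine le_max_of_le_right ?_
    rw [← one_div, le_div_iff₀' hc]
    exact (mul_le_iff_le_one_right ht0).1 h
  · refine le_max_of_le_left ?_
    nlinarith [norm_nonneg x]

end ScaledSublevelSets

section LatticeCounting

variable {d : ℕ}

def unitCube (ν : Fin d → ℕ) : Set (Fin d → ℝ) := Set.univ.pi fun i => Set.Ico (ν i : ℝ) (ν i + 1)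

lemma volume_unitCube (ν : Fin d → ℕ) : volume (unitCube ν) = 1 := by
  simp [unitCube, volume_pi_pi]

lemma disjoint_unitCube {ν μ : Fin d → ℕ} (hνμ : ν ≠ μ) : Disjoint (unitCube ν) (unitCube μ) := by
  refine Set.disjoint_left.2 fun x hν hμ => hνμ (funext fun i => ?_)
  have hνi := hν i (Set.mem_univ i)
  have hμi := hμ i (Set.mem_univ i)
  have hx : 0 ≤ x i := (Nat.cast_nonneg _).trans hνi.1
  rw [← (Nat.floor_eq_iff hx).2 hνi, ← (Nat.floor_eq_iff hx).2 hμi]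

lemma dist_le_one_of_mem_unitCube {ν : Fin d → ℕ} {x : Fin d → ℝ} (hx : x ∈ unitCube ν) :
    dist x (nuR ν) ≤ 1 := by
  refine (dist_pi_le_iff zero_le_one).2 fun i => ?_
  have hxi := hx i (Set.mem_univ i)
  rw [Real.dist_eq, abs_le, nuR]
  constructor <;> linarith [hxi.1, hxi.2]

lemma card_le_volume_cthickening {t : ℝ} (ht : 0 < t) (S : Finset (Fin d → ℕ))
    {X : Set (Fin d → ℝ)} (hS : ∀ ν ∈ S, t⁻¹ • nuR ν ∈ X) :
    (S.card : ℝ≥0∞) ≤ ENNReal.ofReal (t ^ d) * volume (cthickening t⁻¹ X) := by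
  have hsub : t⁻¹ • ⋃ ν ∈ S, unitCube ν ⊆ cthickening t⁻¹ X := by
    rw [Set.smul_set_iUnion₂]
    refine Set.iUnion₂_subset fun ν hν => ?_
    rintro _ ⟨x, hx, rfl⟩
    refine mem_cthickening_of_dist_le _ _ _ _ (hS ν hν) ?_
    rw [dist_smul₀, Real.norm_of_nonneg (inv_nonneg.2 ht.le)]
    exact mul_le_of_le_one_right (inv_nonneg.2 ht.le) (dist_le_one_of_mem_unitCube hx)
  have hvol : volume (t⁻¹ • ⋃ ν ∈ S, unitCube ν) = ENNReal.ofReal (t⁻¹ ^ d) * S.card := by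
    rw [Measure.addHaar_smul, measure_biUnion_finset (fun ν _ μ _ => disjoint_unitCube)
      (fun ν _ => MeasurableSet.univ_pi fun i => measurableSet_Ico), Module.finrank_fin_fun,
      abs_of_pos (by positivity)]
    simp [volume_unitCube]
  calc (S.card : ℝ≥0∞) = ENNReal.ofReal (t ^ d) * (ENNReal.ofReal (t⁻¹ ^ d) * S.card) := by
        rw [← mul_assoc, ← ENNReal.ofReal_mul (by positivity), ← mul_pow,
          mul_inv_cancel₀ ht.ne', one_pow, ENNReal.ofReal_one, one_mul]
    _ ≤ ENNReal.ofReal (t ^ d) * volume (cthickening t⁻¹ X) :=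
        mul_le_mul_right (hvol ▸ measure_mono hsub) _

end LatticeCounting

section Thickening

variable {α : Type*} [PseudoMetricSpace α] [MeasurableSpace α] [OpensMeasurableSpace α]
  {μ : Measure α}

lemma eventually_measure_cthickening_lt {P : Set α} (hfin : ∃ r > 0, μ (cthickening r P) ≠ ∞)
    (hP : μ (frontier P) = 0) {a : ℝ≥0∞} (ha : μ P < a) :
    ∀ᶠ δ in 𝓝 0, μ (cthickening δ P) < a := by
  have hclosure : μ (closure P) ≤ μ P :=
    calc μ (closure P) = μ (P ∪ frontier P) := by rw [closure_eq_self_union_frontier]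
      _ ≤ μ P + μ (frontier P) := measure_union_le _ _
      _ = μ P := by rw [hP, add_zero]
  exact (tendsto_measure_cthickening hfin).eventually_lt_const (hclosure.trans_lt ha)

lemma eventually_measure_cthickening_inv_lt_of_antitoneOn {A : ℝ → Set α}
    (hA : AntitoneOn A (Set.Ioi 0)) (hclosed : ∀ t > 0, IsClosed (A t))
    (hfin : ∃ t > 0, μ (cthickening t⁻¹ (A t)) ≠ ∞) {a : ℝ≥0∞}
    (ha : μ (⋂ τ ∈ Set.Ioi (0 : ℝ), A τ) < a) :
    ∀ᶠ t in atTop, μ (cthickening t⁻¹ (A t)) < a := by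
  -- in the variable `δ = t⁻¹` the thickenings increase, so continuity from above applies at `0⁺`
  set D : ℝ → Set α := fun δ => cthickening δ (A δ⁻¹)
  have hD : ∀ δ δ', 0 < δ → δ ≤ δ' → D δ ⊆ D δ' := fun δ δ' hδ hδδ' =>
    (cthickening_mono hδδ' _).trans <| cthickening_subset_of_subset _ <|
      hA (inv_pos.2 (hδ.trans_le hδδ')) (inv_pos.2 hδ) (inv_anti₀ hδ hδδ')
  have hInter : (⋂ δ > 0, D δ) ⊆ ⋂ τ ∈ Set.Ioi (0 : ℝ), A τ := by
    refine fun x hx => Set.mem_iInter₂.2 fun τ hτ => ?_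
    rw [← (hclosed τ hτ).closure_eq, closure_eq_iInter_cthickening]
    refine Set.mem_iInter₂.2 fun δ hδ => ?_
    have hδ' : 0 < min δ τ⁻¹ := lt_min hδ (inv_pos.2 hτ)
    refine cthickening_mono (min_le_left δ τ⁻¹) _ <| cthickening_subset_of_subset _ ?_
      (Set.mem_iInter₂.1 hx _ hδ')
    exact hA hτ (inv_pos.2 hδ') ((le_inv_comm₀ hτ hδ').2 (min_le_right _ _))
  obtain ⟨t, ht, htfin⟩ := hfin
  have hlim := tendsto_measure_biInter_gt (fun δ _ => isClosed_cthickening.nullMeasurableSet) hD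
    ⟨t⁻¹, inv_pos.2 ht, by simpa [D] using htfin⟩
  filter_upwards [tendsto_inv_atTop_nhdsGT_zero.eventually
    (hlim.eventually_lt_const ((measure_mono hInter).trans_lt ha))] with t ht
  simpa [D] using ht

end Thickening

section Counting

variable {d : ℕ} {b : (Fin d → ℝ) → ℝ} {c R : ℝ} {P : Set (Fin d → ℝ)}

theorem eventually_volume_cthickening_inv_smul_Pset_lt
    (hcont : ContinuousOn b {x | ∀ i, 0 ≤ x i}) (hcase : IsIncreasingCase b ∨ IsDecreasingCase b)
    (hc : 0 < c) (hlow : ∀ x : Fin d → ℝ, (∀ i, 0 ≤ x i) → R ≤ ‖x‖ → c * ‖x‖ ≤ b x)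
    (hPinc : IsIncreasingCase b → P = ⋂ τ ∈ Set.Ioi (0 : ℝ), τ⁻¹ • Pset b τ)
    (hPdec : IsDecreasingCase b → P = ⋃ τ ∈ Set.Ioi (0 : ℝ), τ⁻¹ • Pset b τ)
    (hJordan : volume (frontier P) = 0) {a : ℝ≥0∞} (ha : volume P < a) :
    ∀ᶠ t in atTop, volume (cthickening t⁻¹ (t⁻¹ • Pset b t)) < a := by
  have hball : ∀ t, 1 ≤ t → t⁻¹ • Pset b t ⊆ closedBall 0 (max R c⁻¹) :=
    fun t ht => inv_smul_Pset_subset_closedBall hc hlow ht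
  rcases hcase with hinc | hdec
  · rw [hPinc hinc] at ha
    refine eventually_measure_cthickening_inv_lt_of_antitoneOn hinc.antitoneOn_inv_smul_Pset
      (fun t ht => isClosed_inv_smul_Pset hcont ht) ⟨1, one_pos, ?_⟩ ha
    exact (isBounded_closedBall.subset (by simpa using hball 1 le_rfl)).cthickening
      |>.measure_lt_top.ne
  · have hAP : ∀ t > 0, t⁻¹ • Pset b t ⊆ P := fun t ht =>
      hPdec hdec ▸ Set.subset_biUnion_of_mem (u := fun τ => τ⁻¹ • Pset b τ) (Set.mem_Ioi.2 ht)
    -- here the scaled sublevel sets grow with `t`, so those with `t ≥ 1` already exhaust `P`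
    have hPbdd : IsBounded P := by
      refine (isBounded_closedBall (x := 0) (r := max R c⁻¹)).subset ?_
      rw [hPdec hdec]
      refine Set.iUnion₂_subset fun τ hτ => ?_
      have hτ1 : max τ 1 ∈ Set.Ioi (0 : ℝ) := Set.mem_Ioi.2 (lt_max_of_lt_right one_pos)
      exact (hdec.monotoneOn_inv_smul_Pset hτ hτ1 (le_max_left τ 1)).trans
        (hball _ (le_max_right τ 1))
    have hlim := eventually_measure_cthickening_lt
      ⟨1, one_pos, hPbdd.cthickening.measure_lt_top.ne⟩ hJordan ha
    filter_upwards [tendsto_inv_atTop_zero.eventually hlim, eventually_gt_atTop 0] with t ht ht0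
    exact (measure_mono (cthickening_subset_of_subset _ (hAP t ht0))).trans_lt ht

theorem eventually_card_le_mul_pow
    (hcont : ContinuousOn b {x | ∀ i, 0 ≤ x i}) (hcase : IsIncreasingCase b ∨ IsDecreasingCase b)
    (hc : 0 < c) (hlow : ∀ x : Fin d → ℝ, (∀ i, 0 ≤ x i) → R ≤ ‖x‖ → c * ‖x‖ ≤ b x)
    (hPinc : IsIncreasingCase b → P = ⋂ τ ∈ Set.Ioi (0 : ℝ), τ⁻¹ • Pset b τ)
    (hPdec : IsDecreasingCase b → P = ⋃ τ ∈ Set.Ioi (0 : ℝ), τ⁻¹ • Pset b τ)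
    (hJordan : volume (frontier P) = 0) {K : ℝ} (hK : volume P < ENNReal.ofReal K) :
    ∀ᶠ t in atTop, ∀ S : Finset (Fin d → ℕ), (∀ ν ∈ S, b (nuR ν) ≤ t) →
      (S.card : ℝ) ≤ K * t ^ d := by
  have hK0 : 0 < K := ENNReal.ofReal_pos.1 (pos_of_gt hK)
  filter_upwards [eventually_volume_cthickening_inv_smul_Pset_lt hcont hcase hc hlow hPinc hPdec
    hJordan hK, eventually_gt_atTop 0] with t hvol ht S hS
  have hmem : ∀ ν ∈ S, t⁻¹ • nuR ν ∈ t⁻¹ • Pset b t := fun ν hν =>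
    Set.smul_mem_smul_set ⟨fun i => Nat.cast_nonneg _, hS ν hν⟩
  have hcard := (card_le_volume_cthickening ht S hmem).trans (mul_le_mul_right hvol.le _)
  rw [← ENNReal.ofReal_mul (by positivity)] at hcard
  simpa [mul_comm] using ENNReal.toReal_le_of_le_ofReal (by positivity) hcard

end Counting

lemma lt_of_notMem_of_forall_card_le {ι : Type*} {g : ι → ℝ} {Λ : Finset ι}
    (hΛ : ∀ ν ∈ Λ, ∀ μ, μ ∉ Λ → g ν ≤ g μ) {t : ℝ}
    (hcount : ∀ S : Finset ι, (∀ i ∈ S, g i ≤ t) → S.card ≤ Λ.card) {μ : ι} (hμ : μ ∉ Λ) :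
    t < g μ := by
  classical
  by_contra! h
  have hins := hcount (insert μ Λ) (Finset.forall_mem_insert _ _ _ |>.2
    ⟨h, fun ν hν => (hΛ ν hν μ hμ).trans h⟩)
  rw [Finset.card_insert_of_notMem hμ] at hins
  omega

lemma add_pow_le_pow_mul_exp {t y : ℝ} (ht : 0 < t) (hy : 0 ≤ y) (d : ℕ) :
    (t + y) ^ d ≤ t ^ d * exp (d * y / t) := by
  have h : t + y = t * (1 + y / t) := by field_simp
  rw [h, mul_pow, mul_div_assoc, exp_nat_mul]
  gcongr
  linarith [add_one_le_exp (y / t)]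

lemma sum_pow_mul_exp_neg_le {t : ℝ} {d : ℕ} (ht : 0 < t) (htd : 2 * d ≤ t) (F : Finset ℕ) :
    ∑ k ∈ F, (t + k + 1) ^ d * exp (-(t + k)) ≤ 2 * exp 1 * t ^ d * exp (-t) := by
  set r := exp (-(1 / 2))
  have hterm (k : ℕ) :
      (t + k + 1) ^ d * exp (-(t + k)) ≤ t ^ d * exp (-t) * exp (1 / 2) * r ^ k := by
    have hexp : (d : ℝ) * (k + 1) / t ≤ (k + 1) / 2 := by
      rw [div_le_div_iff₀ ht two_pos]; nlinarith
    calc (t + k + 1) ^ d * exp (-(t + k))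
        ≤ t ^ d * exp ((k + 1) / 2) * exp (-(t + k)) := by
          rw [add_assoc]
          gcongr
          exact (add_pow_le_pow_mul_exp ht (by positivity) d).trans (by gcongr)
      _ = t ^ d * exp (-t) * exp (1 / 2) * r ^ k := by
          rw [← exp_nat_mul, mul_assoc, ← exp_add, mul_assoc, mul_assoc, ← exp_add, ← exp_add]
          ring_nf
  have hr : r < 1 := exp_lt_one_iff.2 (by norm_num)
  have hgeom : ∑ k ∈ F, r ^ k ≤ (1 - r)⁻¹ :=
    tsum_geometric_of_lt_one (exp_pos _).le hr ▸
      (summable_geometric_of_lt_one (exp_pos _).le hr).sum_le_tsum F fun _ _ => by positivity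
  -- with `s = exp (1/2) ≥ 3/2`: `s / (1 - s⁻¹) = s² / (s - 1) ≤ 2 s²`
  have hconst : exp (1 / 2) * (1 - r)⁻¹ ≤ 2 * exp 1 := by
    have hs : 3 / 2 ≤ exp (1 / 2) := by linarith [add_one_le_exp (1 / 2 : ℝ)]
    have hsq : exp 1 = exp (1 / 2) * exp (1 / 2) := by rw [← exp_add]; norm_num
    have hr' : r = (exp (1 / 2))⁻¹ := by rw [← exp_neg]
    have hpos : 0 < 1 - (exp (1 / 2))⁻¹ := by
      rw [sub_pos, inv_lt_one₀ (by positivity)]; linarith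
    rw [hsq, hr', ← div_eq_mul_inv, div_le_iff₀ hpos]
    field_simp
    nlinarith
  calc ∑ k ∈ F, (t + k + 1) ^ d * exp (-(t + k))
      ≤ ∑ k ∈ F, t ^ d * exp (-t) * exp (1 / 2) * r ^ k := Finset.sum_le_sum fun k _ => hterm k
    _ = t ^ d * exp (-t) * exp (1 / 2) * ∑ k ∈ F, r ^ k := by rw [Finset.mul_sum]
    _ ≤ t ^ d * exp (-t) * (exp (1 / 2) * (1 - r)⁻¹) := by rw [mul_assoc]; gcongr
    _ ≤ t ^ d * exp (-t) * (2 * exp 1) := by gcongr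
    _ = 2 * exp 1 * t ^ d * exp (-t) := by ring

theorem tsum_exp_neg_le_of_card_le {ι : Type*} (g : ι → ℝ) {K t : ℝ} {d : ℕ} (hK : 0 ≤ K)
    (ht : 0 < t) (htd : 2 * d ≤ t) (hg : ∀ i, t ≤ g i)
    (hcount : ∀ s, t ≤ s → ∀ S : Finset ι, (∀ i ∈ S, g i ≤ s) → (S.card : ℝ) ≤ K * s ^ d) :
    ∑' i, exp (-g i) ≤ 2 * exp 1 * K * t ^ d * exp (-t) := by
  classical
  refine Real.tsum_le_of_sum_le (fun i => (exp_pos _).le) fun S => ?_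
  -- the `k`-th layer consists of the `i` with `t + k ≤ g i < t + k + 1`
  set layer : ι → ℕ := fun i => ⌊g i - t⌋₊
  have hlayer (k : ℕ) : ∑ i ∈ S with layer i = k, exp (-g i) ≤
      K * ((t + k + 1) ^ d * exp (-(t + k))) := by
    have hmem : ∀ i ∈ S.filter (layer · = k), t + k ≤ g i ∧ g i < t + k + 1 := fun i hi => by
      have := (Nat.floor_eq_iff (sub_nonneg.2 (hg i))).1 (Finset.mem_filter.1 hi).2
      constructor <;> linarith [this.1, this.2]
    calc ∑ i ∈ S with layer i = k, exp (-g i)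
        ≤ ∑ i ∈ S with layer i = k, exp (-(t + k)) :=
          Finset.sum_le_sum fun i hi => exp_le_exp.2 (neg_le_neg (hmem i hi).1)
      _ = (S.filter (layer · = k)).card * exp (-(t + k)) := by
          rw [Finset.sum_const, nsmul_eq_mul]
      _ ≤ K * (t + k + 1) ^ d * exp (-(t + k)) := by
          gcongr
          exact hcount _ (by linarith [k.cast_nonneg (α := ℝ)]) _ fun i hi => (hmem i hi).2.le
      _ = K * ((t + k + 1) ^ d * exp (-(t + k))) := by ring
  calc ∑ i ∈ S, exp (-g i)
      = ∑ k ∈ S.image layer, ∑ i ∈ S with layer i = k, exp (-g i) :=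
        (Finset.sum_fiberwise_of_maps_to (fun i hi => Finset.mem_image_of_mem _ hi) _).symm
    _ ≤ ∑ k ∈ S.image layer, K * ((t + k + 1) ^ d * exp (-(t + k))) :=
        Finset.sum_le_sum fun k _ => hlayer k
    _ = K * ∑ k ∈ S.image layer, (t + k + 1) ^ d * exp (-(t + k)) := by rw [Finset.mul_sum]
    _ ≤ K * (2 * exp 1 * t ^ d * exp (-t)) := by gcongr; exact sum_pow_mul_exp_neg_le ht htd _
    _ = 2 * exp 1 * K * t ^ d * exp (-t) := by ring

lemma tsum_subtype_notMem_le {ι : Type*} {f : ι → ℝ} (hf : 0 ≤ f) (s : Finset ι) :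
    ∑' x : {x // x ∉ s}, f x ≤ ∑' x, f x := by
  by_cases h : Summable f
  · exact h.tsum_subtype_le f {x | x ∉ s} hf
  · rw [tsum_eq_zero_of_not_summable h,
      tsum_eq_zero_of_not_summable ((s.summable_compl_iff (f := f)).not.2 h)]

theorem exists_tsum_compl_le_of_eventually_card_le {ι : Type*} {g : ι → ℝ} {d : ℕ} (hd : d ≠ 0)
    {v ε : ℝ} (hv : 0 < v) (hε : 0 ≤ ε)
    (hcount : ∀ᶠ t in atTop, ∀ S : Finset ι, (∀ i ∈ S, g i ≤ t) →
      (S.card : ℝ) ≤ v * (1 + ε / 2) * t ^ d) :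
    ∃ Mε : ℕ, ∀ M : ℕ, Mε ≤ M → ∀ Λ : Finset ι, Λ.card = M →
      (∀ ν ∈ Λ, ∀ μ, μ ∉ Λ → g ν ≤ g μ) →
      ∑' ν : {ν // ν ∉ Λ}, exp (-g ν) ≤
        2 * exp 1 * M * exp (-((M : ℝ) / (v * (1 + ε))) ^ ((1 : ℝ) / d)) := by
  have hts : Tendsto (fun M : ℕ => ((M : ℝ) / (v * (1 + ε))) ^ ((1 : ℝ) / d)) atTop atTop :=
    (tendsto_rpow_atTop (by positivity)).comp
      (tendsto_natCast_atTop_atTop.atTop_div_const (by positivity))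
  obtain ⟨Mε, hMε⟩ := eventually_atTop.1 <| hts.eventually <|
    (eventually_forall_ge_atTop.2 hcount).and <|
      (eventually_ge_atTop (2 * d : ℝ)).and (eventually_gt_atTop 0)
  refine ⟨Mε, fun M hM Λ hcard hΛ => ?_⟩
  obtain ⟨hcountM, htd, ht⟩ := hMε M hM
  set t := ((M : ℝ) / (v * (1 + ε))) ^ ((1 : ℝ) / d)
  have htpow : t ^ d = M / (v * (1 + ε)) := by
    simp only [t, one_div]
    exact rpow_inv_natCast_pow (by positivity) hd
  have hKt : v * (1 + ε / 2) * t ^ d ≤ M := by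
    rw [htpow, ← mul_div_assoc, div_le_iff₀ (by positivity)]
    nlinarith [mul_nonneg (mul_nonneg hv.le hε) M.cast_nonneg]
  have hout : ∀ μ, μ ∉ Λ → t < g μ := fun μ hμ =>
    lt_of_notMem_of_forall_card_le hΛ (fun S hS => by
      rw [hcard]; exact_mod_cast (hcountM t le_rfl S hS).trans hKt) hμ
  calc _ ≤ 2 * exp 1 * (v * (1 + ε / 2)) * t ^ d * exp (-t) :=
        tsum_exp_neg_le_of_card_le (fun ν : {ν // ν ∉ Λ} => g ν) (by positivity) ht htd
          (fun ν => (hout ν.1 ν.2).le) fun s hs S hS => by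
            simpa using hcountM s hs (S.map (Function.Embedding.subtype _)) (by simpa using hS)
    _ ≤ 2 * exp 1 * M * exp (-t) := by
        rw [mul_assoc _ (v * _)]
        gcongr

/-- Quasi-optimal tail bound (Lemma 2.1 / Theorem 2 of the quasi-optimal analysis):
for every `ε > 0` there is `M_ε` so that for all `M ≥ M_ε` and every quasi-optimal
index set `Λ_M ⊂ ℕ^d` of cardinality `M`,
`∑_{ν ∉ Λ_M} e^{−b(ν)} ≤ C_u(ε) M exp(−(M/(|P|(1+ε)))^{1/d})`. -/
theorem stmt0 {d : ℕ} (hd : 1 ≤ d) (b : (Fin d → ℝ) → ℝ) (hb : AssumptionA b)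
    (P : Set (Fin d → ℝ))
    (hPinc : IsIncreasingCase b → P = ⋂ τ ∈ Set.Ioi (0 : ℝ), τ⁻¹ • Pset b τ)
    (hPdec : IsDecreasingCase b → P = ⋃ τ ∈ Set.Ioi (0 : ℝ), τ⁻¹ • Pset b τ)
    (hJordan : volume (frontier P) = 0) :
    ∀ ε : ℝ, 0 < ε → ∃ Mε : ℕ, ∀ M : ℕ, Mε ≤ M →
      ∀ Λ : Finset (Fin d → ℕ), Λ.card = M →
        (∀ ν ∈ Λ, ∀ μ : Fin d → ℕ, μ ∉ Λ → b (nuR ν) ≤ b (nuR μ)) →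
        (∑' ν : {ν : Fin d → ℕ // ν ∉ Λ}, Real.exp (-b (nuR ν.1))) ≤
          Cu ε * M *
            Real.exp (-((M : ℝ) / ((volume P).toReal * (1 + ε))) ^ ((1 : ℝ) / d)) := by
  intro ε hε
  obtain ⟨c, R, hc, hlow⟩ := hb.exists_mul_norm_le
  obtain ⟨-, hcont, hcase, -⟩ := hb
  have hCu := two_mul_exp_one_le_Cu hε.le
  rcases (ENNReal.toReal_nonneg (a := volume P)).eq_or_lt with hv | hv
  · -- for `|P| = 0` the bound degenerates to `Cu ε * M`, since `M / 0 = 0`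
    refine ⟨⌈∑' ν, exp (-b (nuR ν))⌉₊, fun M hM Λ _ _ => ?_⟩
    rw [← hv, zero_mul, div_zero, zero_rpow (by positivity), neg_zero, exp_zero, mul_one]
    calc _ ≤ ∑' ν, exp (-b (nuR ν)) := tsum_subtype_notMem_le (fun _ => (exp_pos _).le) Λ
      _ ≤ M := (Nat.le_ceil _).trans (by exact_mod_cast hM)
      _ ≤ Cu ε * M := le_mul_of_one_le_left M.cast_nonneg (by linarith [add_one_le_exp 1])
  have hK : volume P < ENNReal.ofReal ((volume P).toReal * (1 + ε / 2)) := by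
    calc volume P = ENNReal.ofReal (volume P).toReal :=
          (ENNReal.ofReal_toReal (ENNReal.toReal_pos_iff.1 hv).2.ne).symm
      _ < _ := (ENNReal.ofReal_lt_ofReal_iff (by positivity)).2 (by nlinarith)
  obtain ⟨Mε, hMε⟩ := exists_tsum_compl_le_of_eventually_card_le (by omega) hv hε.le
    (eventually_card_le_mul_pow hcont hcase hc hlow hPinc hPdec hJordan hK)
  refine ⟨Mε, fun M hM Λ hcard hΛ => (hMε M hM Λ hcard hΛ).trans ?_⟩
  gcongr
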